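/- If g, f ∈ L¹_loc([0,∞)) form a Sonine pair and both g and f are non-increasing on some interval (0,ε], then t·g(t) → 0 and t·f(t) → 0 as t → 0⁺. -/

import Mathlib

open MeasureTheory Set Filter Topology

/-!
If `g` stayed bounded near `0`, then `1 = ∫₀ᵗ f(u) g(t - u) du ≤ C ∫₀ᵗ |f|`, which tends to `0`
with `t`; so an antitone `g` tends to `+∞` at `0⁺`, and likewise `f`. Once both are positive,
monotonicity gives `t f(t) g(t) ≤ ∫₀ᵗ f(u) g(t - u) du = 1`, i.e. `0 ≤ t f(t) ≤ 1 / g(t) → 0`.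
-/

lemma intervalIntegral_mul_comp_sub_comm (f g : ℝ → ℝ) (t : ℝ) :
    ∫ u in (0 : ℝ)..t, f u * g (t - u) = ∫ u in (0 : ℝ)..t, g u * f (t - u) := by
  simpa [mul_comm] using
    (intervalIntegral.integral_comp_sub_left (a := 0) (b := t) (fun u => g u * f (t - u)) t)

lemma tendsto_intervalIntegral_nhdsGT_zero {f : ℝ → ℝ} {ε : ℝ} (hε : 0 < ε)
    (hf : IntegrableOn f (Ioc 0 ε)) :
    Tendsto (fun t => ∫ u in (0 : ℝ)..t, f u) (𝓝[>] 0) (𝓝 0) := by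
  have hcont := intervalIntegral.continuousOn_primitive_interval'
    ((intervalIntegrable_iff_integrableOn_Ioc_of_le hε.le).2 hf) left_mem_uIcc 0 left_mem_uIcc
  simpa using hcont.tendsto.mono_left (nhdsWithin_le_of_mem (by
    rw [uIcc_of_le hε.le]; exact Icc_mem_nhdsGT hε))

lemma AntitoneOn.tendsto_nhdsGT_atTop {g : ℝ → ℝ} {ε : ℝ} (hg : AntitoneOn g (Ioc 0 ε))
    (hbdd : ¬ BddAbove (g '' Ioc 0 ε)) : Tendsto g (𝓝[>] 0) atTop := by
  refine tendsto_atTop.2 fun M => ?_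
  obtain ⟨_, ⟨s, hs, rfl⟩, hMs⟩ := not_bddAbove_iff.1 hbdd M
  filter_upwards [Ioo_mem_nhdsGT hs.1] with t ht
  exact hMs.le.trans (hg ⟨ht.1, ht.2.le.trans hs.2⟩ hs ht.2.le)

lemma one_le_mul_intervalIntegral_abs {f g : ℝ → ℝ} {t C : ℝ} (ht : 0 < t)
    (hf : IntervalIntegrable f volume 0 t) (hgC : ∀ u ∈ Ioo 0 t, |g u| ≤ C)
    (hconv : ∫ u in (0 : ℝ)..t, f u * g (t - u) = 1) :
    1 ≤ C * ∫ u in (0 : ℝ)..t, |f u| := by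
  rw [← hconv, ← intervalIntegral.integral_const_mul]
  refine intervalIntegral.integral_mono_on_of_le_Ioo ht.le
    (intervalIntegral.intervalIntegrable_of_integral_ne_zero (by simp [hconv])) (hf.abs.const_mul C)
    fun u hu => ?_
  calc f u * g (t - u) ≤ |f u| * |g (t - u)| := by rw [← abs_mul]; exact le_abs_self _
    _ ≤ |f u| * C := by gcongr; exact hgC _ ⟨by linarith [hu.2], by linarith [hu.1]⟩
    _ = C * |f u| := mul_comm _ _

lemma tendsto_atTop_of_intervalIntegral_mul_comp_sub_eq_one {f g : ℝ → ℝ} {ε : ℝ} (hε : 0 < ε)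
    (hf : IntegrableOn f (Ioc 0 ε)) (hg : AntitoneOn g (Ioc 0 ε))
    (hconv : ∀ t > 0, ∫ u in (0 : ℝ)..t, f u * g (t - u) = 1) :
    Tendsto g (𝓝[>] 0) atTop := by
  refine hg.tendsto_nhdsGT_atTop fun ⟨M, hM⟩ => ?_
  set C := max M (-g ε)
  have hgC : ∀ u ∈ Ioc 0 ε, |g u| ≤ C := fun u hu => abs_le.2
    ⟨by linarith [le_max_right M (-g ε), hg hu ⟨hε, le_rfl⟩ hu.2],
      (hM (mem_image_of_mem g hu)).trans (le_max_left _ _)⟩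
  have hlower : ∀ᶠ t in 𝓝[>] 0, 1 ≤ C * ∫ u in (0 : ℝ)..t, |f u| := by
    filter_upwards [Ioo_mem_nhdsGT hε] with t ht
    refine one_le_mul_intervalIntegral_abs ht.1
      ((intervalIntegrable_iff_integrableOn_Ioc_of_le ht.1.le).2
        (hf.mono_set (Ioc_subset_Ioc_right ht.2.le)))
      (fun u hu => hgC u ⟨hu.1, by linarith [hu.2, ht.2]⟩) (hconv t ht.1)
  have hsmall : Tendsto (fun t => C * ∫ u in (0 : ℝ)..t, |f u|) (𝓝[>] 0) (𝓝 0) := by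
    simpa using (tendsto_intervalIntegral_nhdsGT_zero hε hf.abs).const_mul C
  exact absurd (ge_of_tendsto hsmall hlower) (by norm_num)

lemma mul_mul_le_intervalIntegral_mul_comp_sub {f g : ℝ → ℝ} {t : ℝ} (ht : 0 < t)
    (hfm : AntitoneOn f (Ioc 0 t)) (hgm : AntitoneOn g (Ioc 0 t)) (hf : 0 ≤ f t) (hg : 0 ≤ g t)
    (hint : IntervalIntegrable (fun u => f u * g (t - u)) volume 0 t) :
    t * (f t * g t) ≤ ∫ u in (0 : ℝ)..t, f u * g (t - u) := by
  have hmem : t ∈ Ioc 0 t := ⟨ht, le_rfl⟩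
  calc t * (f t * g t) = ∫ _ in (0 : ℝ)..t, f t * g t := by simp; ring
    _ ≤ ∫ u in (0 : ℝ)..t, f u * g (t - u) := by
      refine intervalIntegral.integral_mono_on_of_le_Ioo ht.le intervalIntegrable_const hint
        fun u hu => ?_
      have hfu : f t ≤ f u := hfm ⟨hu.1, hu.2.le⟩ hmem hu.2.le
      have hgu : g t ≤ g (t - u) :=
        hgm ⟨by linarith [hu.2], by linarith [hu.1]⟩ hmem (by linarith [hu.1])
      calc f t * g t ≤ f u * g t := by gcongr
        _ ≤ f u * g (t - u) := by gcongr; exact hf.trans hfu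

lemma tendsto_mul_nhdsGT_zero_of_intervalIntegral_mul_comp_sub_eq_one {f g : ℝ → ℝ} {ε : ℝ}
    (hε : 0 < ε) (hfm : AntitoneOn f (Ioc 0 ε)) (hgm : AntitoneOn g (Ioc 0 ε))
    (hf : Tendsto f (𝓝[>] 0) atTop) (hg : Tendsto g (𝓝[>] 0) atTop)
    (hconv : ∀ t > 0, ∫ u in (0 : ℝ)..t, f u * g (t - u) = 1) :
    Tendsto (fun t => t * f t) (𝓝[>] 0) (𝓝 0) := by
  have hbounds : ∀ᶠ t in 𝓝[>] 0, 0 ≤ t * f t ∧ t * f t ≤ (g t)⁻¹ := by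
    filter_upwards [Ioc_mem_nhdsGT hε, hf.eventually_ge_atTop 0, hg.eventually_gt_atTop 0]
      with t ht hf0 hg0
    refine ⟨mul_nonneg ht.1.le hf0, ?_⟩
    rw [← one_div, le_div_iff₀ hg0]
    calc t * f t * g t = t * (f t * g t) := mul_assoc _ _ _
      _ ≤ ∫ u in (0 : ℝ)..t, f u * g (t - u) :=
        mul_mul_le_intervalIntegral_mul_comp_sub ht.1 (hfm.mono (Ioc_subset_Ioc_right ht.2))
          (hgm.mono (Ioc_subset_Ioc_right ht.2)) hf0 hg0.le
          (intervalIntegral.intervalIntegrable_of_integral_ne_zero (by simp [hconv t ht.1]))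
      _ = 1 := hconv t ht.1
  exact tendsto_of_tendsto_of_tendsto_of_le_of_le' tendsto_const_nhds hg.inv_tendsto_atTop
    (hbounds.mono fun _ h => h.1) (hbounds.mono fun _ h => h.2)

/-- For a Sonine pair non-increasing near 0, t·g(t) → 0 and t·f(t) → 0 as t → 0⁺. -/
theorem sonine_pair_t_mul_tendsto_zero (g f : ℝ → ℝ)
    (hg : ∀ T > 0, IntegrableOn g (Set.Ioc 0 T))
    (hf : ∀ T > 0, IntegrableOn f (Set.Ioc 0 T))
    (hson : ∀ t > 0, ∫ s in (0:ℝ)..t, g s * f (t - s) = 1)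
    (ε : ℝ) (hε : 0 < ε)
    (hgm : AntitoneOn g (Set.Ioc 0 ε))
    (hfm : AntitoneOn f (Set.Ioc 0 ε)) :
    Tendsto (fun t => t * g t) (nhdsWithin 0 (Set.Ioi 0)) (nhds 0) ∧
      Tendsto (fun t => t * f t) (nhdsWithin 0 (Set.Ioi 0)) (nhds 0) := by
  have hson' : ∀ t > 0, ∫ s in (0:ℝ)..t, f s * g (t - s) = 1 := fun t ht => by
    rw [intervalIntegral_mul_comp_sub_comm, hson t ht]
  have hg_top := tendsto_atTop_of_intervalIntegral_mul_comp_sub_eq_one hε (hf ε hε) hgm hson'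
  have hf_top := tendsto_atTop_of_intervalIntegral_mul_comp_sub_eq_one hε (hg ε hε) hfm hson
  exact ⟨tendsto_mul_nhdsGT_zero_of_intervalIntegral_mul_comp_sub_eq_one hε hgm hfm hg_top hf_top
      hson,
    tendsto_mul_nhdsGT_zero_of_intervalIntegral_mul_comp_sub_eq_one hε hfm hgm hf_top hg_top
      hson'⟩
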